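/- Let 𝒜 = ⟨Q, A, δ⟩ be an n-state automaton with an independent set W of k words with range R, let L_W be the maximal length of the words of W, and let M be the maximal cardinality of a reducible subset of R. Then for every integer t with 1 ≤ t ≤ ⌈k/M⌉ there exist t pairwise distinct states q_1, …, q_t ∈ R and a word v ∈ A* such that Card({q_i} v^{-1} ∩ R) = M for each i = 1, …, t, and |v| ≤ t(M − 1)(L_W + n + 1) − t·k·ln(M). -/

import Mathlib

/-!
Every fibre `{p ∈ R | δ(p, v) = c}` is reducible, hence has at most `M` states. By independence,
the number of states of `R` that `y w v` sends to `c`, averaged over `w ∈ W`, equals the size `m`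
of the fibre of `c` under `v`. So a full fibre (of size `M`) stays full when any `y w` is
prepended, and a fibre of size `0 < m < M` grows under some `y w` as soon as the average is not
attained term by term. A reducing word of a reducible set of size `M` is such a `y`; a shortest
one is found in a Krylov chain of the row vectors `[R] δ(y)` and has length at most the
dimension of the subspace of "balanced" vectors, which is `≤ n + 1 - k / m` since the
indicators of the preimages `F w⁻¹` span a space of dimension `≥ k / m`. Growing one fibre from
size `1` to `M` thus costs at most `∑_{m < M} (L + n + 1 - k / m) ≤ (M - 1)(L + n + 1) - k ln M`,
and this is done for `t` distinct states, which remain available while `(t - 1) M < k`.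
-/

/-- The extension of a transition function `δ : Q → A → Q` to words. -/
def run {Q A : Type*} (δ : Q → A → Q) (q : Q) (u : List A) : Q := u.foldl δ q

/-- `W` is an independent set of words with range `R`. -/
def IsIndependent {Q A : Type*} [DecidableEq Q] (δ : Q → A → Q)
    (W : Finset (List A)) (R : Finset Q) : Prop :=
  W.card = R.card ∧ ∀ s : Q, W.image (fun w => run δ s w) = R

/-- A set of states `K` is reducible if some word maps it to a singleton. -/
def Reducible {Q A : Type*} [DecidableEq Q] (δ : Q → A → Q) (K : Finset Q) : Prop :=
  ∃ (v : List A) (q : Q), K.image (fun p => run δ p v) = {q}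

open Finset Module Submodule

section Combinatorics

variable {Q α : Type*} (δ : Q → α → Q)

theorem run_append (p : Q) (u v : List α) : run δ p (u ++ v) = run δ (run δ p u) v :=
  List.foldl_append ..

variable [DecidableEq Q]

def fiber (R : Finset Q) (v : List α) (c : Q) : Finset Q := {p ∈ R | run δ p v = c}

variable {δ} {W : Finset (List α)} {R : Finset Q}

theorem IsIndependent.run_mem (hW : IsIndependent δ W R) (s : Q) {w : List α} (hw : w ∈ W) :
    run δ s w ∈ R :=
  hW.2 s ▸ mem_image_of_mem _ hw

theorem IsIndependent.run_append_mem (hW : IsIndependent δ W R) (s : Q) (y : List α) {w : List α}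
    (hw : w ∈ W) : run δ s (y ++ w) ∈ R := by
  rw [run_append]; exact hW.run_mem _ hw

theorem IsIndependent.card_filter_run_mem (hW : IsIndependent δ W R) (s : Q) {F : Finset Q}
    (hF : F ⊆ R) : #{w ∈ W | run δ s w ∈ F} = #F := by
  have hinj : Set.InjOn (run δ s) W := injOn_of_card_image_eq (by rw [hW.2 s, hW.1])
  refine card_nbij (run δ s) (fun w hw => (mem_filter.1 hw).2)
    (hinj.mono (coe_subset.2 (filter_subset _ _))) ?_
  intro q hq
  obtain ⟨w, hw, rfl⟩ := mem_image.1 (hW.2 s ▸ hF hq : q ∈ W.image (run δ s))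
  exact ⟨w, mem_filter.2 ⟨hw, mem_coe.1 hq⟩, rfl⟩

theorem IsIndependent.sum_card_filter_run_append_mem (hW : IsIndependent δ W R) {F : Finset Q}
    (hF : F ⊆ R) (y : List α) :
    ∑ w ∈ W, #{p ∈ R | run δ p (y ++ w) ∈ F} = #W * #F := by
  have := sum_card_bipartiteAbove_eq_sum_card_bipartiteBelow (s := W) (t := R)
    (r := fun w p => run δ p (y ++ w) ∈ F)
  simp only [bipartiteAbove, bipartiteBelow, run_append] at this
  simp only [run_append, this, hW.card_filter_run_mem _ hF, sum_const, smul_eq_mul, hW.1]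

theorem card_fiber_le {M : ℕ} (hM : ∀ K ⊆ R, Reducible δ K → #K ≤ M) (v : List α) (c : Q) :
    #(fiber δ R v c) ≤ M := by
  rcases (fiber δ R v c).eq_empty_or_nonempty with h | h
  · simp [h]
  refine hM _ (filter_subset _ _) ⟨v, c, ?_⟩
  rw [eq_singleton_iff_unique_mem]
  obtain ⟨p, hp⟩ := h
  exact ⟨mem_image.2 ⟨p, hp, (mem_filter.1 hp).2⟩, by
    intro x hx
    obtain ⟨q, hq, rfl⟩ := mem_image.1 hx
    exact (mem_filter.1 hq).2⟩

theorem fiber_append {u : List α} (hu : ∀ p ∈ R, run δ p u ∈ R) (v : List α) (c : Q) :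
    fiber δ R (u ++ v) c = {p ∈ R | run δ p u ∈ fiber δ R v c} :=
  filter_congr fun p hp => by simp [fiber, run_append, hu p hp]

theorem IsIndependent.card_fiber_append_eq {M : ℕ} (hW : IsIndependent δ W R)
    (hM : ∀ K ⊆ R, Reducible δ K → #K ≤ M) {v : List α} {d : Q} (hd : #(fiber δ R v d) = M)
    (y : List α) {w : List α} (hw : w ∈ W) : #(fiber δ R (y ++ w ++ v) d) = M := by
  have hle : ∀ w ∈ W, #{p ∈ R | run δ p (y ++ w) ∈ fiber δ R v d} ≤ M := fun w hw =>
    fiber_append (fun p _ => hW.run_append_mem p y hw) v d ▸ card_fiber_le hM _ d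
  rw [fiber_append fun p _ => hW.run_append_mem p y hw]
  refine (sum_eq_sum_iff_of_le hle).1 ?_ w hw
  rw [hW.sum_card_filter_run_append_mem (F := fiber δ R v d) (filter_subset _ _), hd, sum_const,
    smul_eq_mul]

theorem IsIndependent.exists_card_filter_gt (hW : IsIndependent δ W R) {F : Finset Q}
    (hF : F ⊆ R) {y : List α} (h : ∃ w ∈ W, #{p ∈ R | run δ p (y ++ w) ∈ F} ≠ #F) :
    ∃ w ∈ W, #F < #{p ∈ R | run δ p (y ++ w) ∈ F} := by
  by_contra! hle
  obtain ⟨w, hw, hne⟩ := h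
  refine hne ((sum_eq_sum_iff_of_le hle).1 ?_ w hw)
  rw [hW.sum_card_filter_run_append_mem hF, sum_const, smul_eq_mul]

theorem IsIndependent.exists_card_filter_ne (hW : IsIndependent δ W R) {F : Finset Q}
    (hF : F ⊆ R) (hFne : F.Nonempty) (hK : ∃ K ⊆ R, Reducible δ K ∧ #F < #K) :
    ∃ z, ∃ w ∈ W, #{p ∈ R | run δ p (z ++ w) ∈ F} ≠ #F := by
  obtain ⟨K, hKR, ⟨z, q, hz⟩, hFK⟩ := hK
  obtain ⟨w, hw⟩ : {w ∈ W | run δ q w ∈ F}.Nonempty := by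
    rw [← card_pos, hW.card_filter_run_mem q hF]; exact hFne.card_pos
  refine ⟨z, w, (mem_filter.1 hw).1, (hFK.trans_le (card_le_card fun p hp => ?_)).ne'⟩
  have hpq : run δ p z = q := mem_singleton.1 (hz ▸ mem_image_of_mem _ hp)
  simpa [run_append, hpq, hKR hp] using (mem_filter.1 hw).2

theorem exists_run_notMem {M : ℕ} {v : List α} {C : Finset Q}
    (hC : ∀ c ∈ C, #(fiber δ R v c) = M) (hlt : #C * M < #R) : ∃ p ∈ R, run δ p v ∉ C := by
  by_contra! h
  rw [card_eq_sum_card_fiberwise h] at hlt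
  exact hlt.ne' ((sum_congr rfl hC).trans (by rw [sum_const, smul_eq_mul]))

end Combinatorics

section ShortWords

variable {K V α : Type*} [Field K] [AddCommGroup V] [Module K V] (ρ : List α → V)

variable (K) in
def spanShortWords (j : ℕ) : Submodule K V := span K (ρ '' {y | y.length < j})

variable (K) in
theorem spanShortWords_mono : Monotone (spanShortWords K ρ) := fun _ _ hij =>
  span_mono (Set.image_mono fun _ hy => lt_of_lt_of_le hy hij)

variable {ρ} {f : α → V →ₗ[K] V} (hρ : ∀ y a, ρ (y ++ [a]) = f a (ρ y))
include hρ

theorem map_spanShortWords_le (a : α) (j : ℕ) :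
    (spanShortWords K ρ j).map (f a) ≤ spanShortWords K ρ (j + 1) := by
  rw [spanShortWords, map_span, span_le]
  rintro _ ⟨_, ⟨y, hy, rfl⟩, rfl⟩
  exact subset_span ⟨y ++ [a], by simpa using hy, hρ y a⟩

theorem mem_spanShortWords_of_eq {j : ℕ}
    (hj : spanShortWords K ρ j = spanShortWords K ρ (j + 1)) (y : List α) :
    ρ y ∈ spanShortWords K ρ (j + 1) := by
  induction y using List.reverseRecOn with
  | nil => exact subset_span ⟨[], by simp, rfl⟩
  | append_singleton y a ih =>
    rw [hρ]
    exact map_spanShortWords_le hρ a j (mem_map_of_mem (hj ▸ ih))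

theorem spanShortWords_saturated_or_le_finrank [FiniteDimensional K V] (j : ℕ) :
    (∀ y, ρ y ∈ spanShortWords K ρ j) ∨ j ≤ finrank K (spanShortWords K ρ j) := by
  induction j with
  | zero => exact .inr (Nat.zero_le _)
  | succ j ih =>
    rcases ih with hsat | hj
    · exact .inl fun y => spanShortWords_mono K ρ j.le_succ (hsat y)
    rcases (spanShortWords_mono K ρ j.le_succ).lt_or_eq with hlt | heq
    · exact .inr (hj.trans_lt (finrank_lt_finrank_of_lt hlt))
    · exact .inl (mem_spanShortWords_of_eq hρ heq)

theorem exists_length_le_finrank_notMem [FiniteDimensional K V] (T : Submodule K V)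
    (h : ∃ y, ρ y ∉ T) : ∃ y, y.length ≤ finrank K T ∧ ρ y ∉ T := by
  by_contra! hshort
  have hle : spanShortWords K ρ (finrank K T + 1) ≤ T :=
    span_le.2 fun _ ⟨y, hy, hyT⟩ => hyT ▸ hshort y (Nat.lt_succ_iff.1 hy)
  rcases spanShortWords_saturated_or_le_finrank hρ (finrank K T + 1) with hsat | hrank
  · obtain ⟨y, hy⟩ := h
    exact hy (hle (hsat y))
  · have := finrank_mono hle
    omega

end ShortWords

section DotProduct

variable {ι K : Type*} [Field K]

theorem card_le_mul_finrank_span [DecidableEq K] {S : Finset (ι → K)} {R : Finset ι} {m : ℕ}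
    (hsupp : ∀ x ∈ S, #{i ∈ R | x i ≠ 0} ≤ m) (hcover : ∀ i ∈ R, ∃ x ∈ S, x i ≠ 0) :
    #R ≤ m * finrank K (span K (S : Set (ι → K))) := by
  classical
  obtain ⟨b, hbS, hspan, hind⟩ := exists_linearIndependent K (S : Set (ι → K))
  obtain ⟨B, rfl⟩ := (S.finite_toSet.subset hbS).exists_finset_coe
  have hcoverB : ∀ i ∈ R, ∃ x ∈ B, x i ≠ 0 := by
    intro i hi
    by_contra! hB
    obtain ⟨x, hxS, hxi⟩ := hcover i hi
    have hker : span K (B : Set (ι → K)) ≤ LinearMap.ker (LinearMap.proj i) :=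
      span_le.2 fun u hu => hB u hu
    exact hxi (hker (hspan ▸ subset_span hxS))
  calc #R ≤ #(B.biUnion fun x => {i ∈ R | x i ≠ 0}) := card_le_card fun i hi => by
        obtain ⟨x, hx, hxi⟩ := hcoverB i hi
        exact mem_biUnion.2 ⟨x, hx, mem_filter.2 ⟨hi, hxi⟩⟩
    _ ≤ ∑ x ∈ B, #{i ∈ R | x i ≠ 0} := card_biUnion_le
    _ ≤ ∑ _x ∈ B, m := sum_le_sum fun x hx => hsupp x (hbS hx)
    _ = m * finrank K (span K (S : Set (ι → K))) := by
        rw [sum_const, smul_eq_mul, mul_comm, ← hspan, finrank_span_finset_eq_card hind]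

variable [Fintype ι]

theorem mem_orthogonalBilin_span_iff {S : Set (ι → K)} {x : ι → K} :
    x ∈ (span K S).orthogonalBilin (dotProductBilin K K) ↔ ∀ u ∈ S, u ⬝ᵥ x = 0 := by
  refine ⟨fun h u hu => h u (subset_span hu), fun h u hu => ?_⟩
  induction hu using span_induction with
  | mem u hu => exact h u hu
  | zero => simp
  | add u v _ _ hu hv => simp_all
  | smul c u _ hu => simp_all

theorem finrank_orthogonalBilin_add_finrank_le [LinearOrder K] [IsStrictOrderedRing K]
    (U : Submodule K (ι → K)) :
    finrank K (U.orthogonalBilin (dotProductBilin K K)) + finrank K U ≤ Fintype.card ι := by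
  refine (finrank_add_finrank_le_of_disjoint ?_).trans (finrank_fintype_fun_eq_card K).le
  rw [disjoint_iff_inf_le]
  rintro x ⟨hxT, hxU⟩
  exact (mem_bot K).2 (dotProduct_self_eq_zero.1 (hxT x hxU))

end DotProduct

section ImageVector

variable {Q α : Type*} [Fintype Q] [DecidableEq Q] (δ : Q → α → Q) (R : Finset Q)

def imageVector (y : List α) : Q → ℚ := ∑ p ∈ R, Pi.single (run δ p y) 1

def transitionMatrix (a : α) : Matrix Q Q ℚ := Matrix.of fun s s' => if δ s a = s' then 1 else 0

theorem dotProduct_imageVector (g : Q → ℚ) (y : List α) :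
    g ⬝ᵥ imageVector δ R y = ∑ p ∈ R, g (run δ p y) := by
  simp [imageVector, dotProduct_sum, dotProduct_single]

theorem imageVector_append_singleton (y : List α) (a : α) :
    imageVector δ R (y ++ [a]) = (transitionMatrix δ a).vecMulLinear (imageVector δ R y) := by
  ext s
  rw [Matrix.vecMulLinear_apply, Matrix.vecMul, dotProduct_comm, dotProduct_imageVector]
  simp [imageVector, Pi.single_apply, transitionMatrix, run, eq_comm]

variable (W : Finset (List α)) (F : Finset Q)

def preimageIndicator (w : List α) : Q → ℚ := fun s => if run δ s w ∈ F then 1 else 0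

def defectVector (w : List α) : Q → ℚ := (#R : ℚ) • preimageIndicator δ F w - (#F : ℚ) • 1

def balancedSubspace : Submodule ℚ (Q → ℚ) :=
  (span ℚ (W.image (defectVector δ R F) : Set (Q → ℚ))).orthogonalBilin (dotProductBilin ℚ ℚ)

theorem imageVector_mem_balancedSubspace_iff (hR : R.Nonempty) (y : List α) :
    imageVector δ R y ∈ balancedSubspace δ R W F ↔
      ∀ w ∈ W, #{p ∈ R | run δ p (y ++ w) ∈ F} = #F := by
  have hdot (w : List α) : defectVector δ R F w ⬝ᵥ imageVector δ R y =
      #R * (#{p ∈ R | run δ p (y ++ w) ∈ F} - #F) := by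
    simp only [defectVector, preimageIndicator, sub_dotProduct, smul_dotProduct,
      dotProduct_imageVector, run_append, natCast_card_filter, Pi.one_apply, sum_const,
      nsmul_eq_mul, mul_one, smul_eq_mul]
    ring
  rw [balancedSubspace, mem_orthogonalBilin_span_iff]
  simp [hdot, hR.card_pos.ne', sub_eq_zero]

end ImageVector

section Escape

variable {Q α : Type*} [Fintype Q] [DecidableEq Q] {δ : Q → α → Q} {W : Finset (List α)}
  {R F : Finset Q}

theorem IsIndependent.finrank_balancedSubspace_le (hW : IsIndependent δ W R) (hFR : F ⊆ R)
    (hF : F.Nonempty) (hbal : ∀ w ∈ W, #{p ∈ R | run δ p w ∈ F} = #F) :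
    (finrank ℚ (balancedSubspace δ R W F) : ℝ) ≤ Fintype.card Q + 1 - #R / #F := by
  set U := span ℚ (W.image (defectVector δ R F) : Set (Q → ℚ))
  set X := span ℚ (W.image (preimageIndicator δ F) : Set (Q → ℚ))
  have hR : (#R : ℚ) ≠ 0 := by exact_mod_cast (hF.mono hFR).card_pos.ne'
  have hXU : X ≤ U ⊔ span ℚ {1} := by
    refine span_le.2 fun x hx => ?_
    obtain ⟨w, hw, rfl⟩ := mem_image.1 hx
    have hsplit : preimageIndicator δ F w =
        (#R : ℚ)⁻¹ • (defectVector δ R F w + (#F : ℚ) • 1) := by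
      rw [defectVector, sub_add_cancel, inv_smul_smul₀ hR]
    rw [SetLike.mem_coe, hsplit]
    exact smul_mem _ _ (add_mem (mem_sup_left (subset_span (mem_image_of_mem _ hw)))
      (mem_sup_right (smul_mem _ _ (mem_span_singleton_self 1))))
  have hXrank : finrank ℚ X ≤ finrank ℚ U + 1 :=
    (finrank_mono hXU).trans <| (finrank_add_le_finrank_add_finrank _ _).trans <|
      Nat.add_le_add_left ((finrank_span_le_card _).trans (by simp)) _
  have hcover : #R ≤ #F * finrank ℚ X := by
    refine card_le_mul_finrank_span (fun x hx => ?_) fun p hp => ?_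
    · obtain ⟨w, hw, rfl⟩ := mem_image.1 hx
      simpa [preimageIndicator] using (hbal w hw).le
    · obtain ⟨w, hw⟩ : {w ∈ W | run δ p w ∈ F}.Nonempty := by
        rw [← card_pos, hW.card_filter_run_mem p hFR]; exact hF.card_pos
      exact ⟨_, mem_image_of_mem _ (mem_filter.1 hw).1,
        by simp [preimageIndicator, (mem_filter.1 hw).2]⟩
  have horth := finrank_orthogonalBilin_add_finrank_le U
  have hdiv : (#R : ℝ) / #F ≤ finrank ℚ X := by
    rw [div_le_iff₀ (by exact_mod_cast hF.card_pos)]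
    exact_mod_cast (mul_comm (#F) _ ▸ hcover)
  have : (finrank ℚ (balancedSubspace δ R W F) : ℝ) + finrank ℚ U ≤ Fintype.card Q := by
    exact_mod_cast horth
  have : (finrank ℚ X : ℝ) ≤ finrank ℚ U + 1 := by exact_mod_cast hXrank
  linarith

theorem IsIndependent.exists_short_word_card_filter_ne (hW : IsIndependent δ W R) (hFR : F ⊆ R)
    (hF : F.Nonempty) (hbal : ∀ w ∈ W, #{p ∈ R | run δ p w ∈ F} = #F)
    (hz : ∃ z, ∃ w ∈ W, #{p ∈ R | run δ p (z ++ w) ∈ F} ≠ #F) :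
    ∃ y : List α, (y.length : ℝ) ≤ Fintype.card Q + 1 - #R / #F ∧
      ∃ w ∈ W, #{p ∈ R | run δ p (y ++ w) ∈ F} ≠ #F := by
  have hmem := imageVector_mem_balancedSubspace_iff δ R W F (hF.mono hFR)
  obtain ⟨y, hy, hyT⟩ := exists_length_le_finrank_notMem
    (f := fun a => (transitionMatrix δ a).vecMulLinear) (imageVector_append_singleton δ R)
    (balancedSubspace δ R W F) (by simpa [hmem] using hz)
  exact ⟨y, (Nat.cast_le.2 hy).trans (hW.finrank_balancedSubspace_le hFR hF hbal),
    by simpa [hmem] using hyT⟩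

theorem IsIndependent.exists_short_word_card_filter_gt (hW : IsIndependent δ W R) (hFR : F ⊆ R)
    (hF : F.Nonempty) (hK : ∃ K ⊆ R, Reducible δ K ∧ #F < #K) :
    ∃ y : List α, (y.length : ℝ) ≤ Fintype.card Q + 1 - #R / #F ∧
      ∃ w ∈ W, #F < #{p ∈ R | run δ p (y ++ w) ∈ F} := by
  suffices ∃ y : List α, (y.length : ℝ) ≤ Fintype.card Q + 1 - #R / #F ∧
      ∃ w ∈ W, #{p ∈ R | run δ p (y ++ w) ∈ F} ≠ #F by
    obtain ⟨y, hy, hne⟩ := this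
    exact ⟨y, hy, hW.exists_card_filter_gt hFR hne⟩
  by_cases hbal : ∀ w ∈ W, #{p ∈ R | run δ p w ∈ F} = #F
  · exact hW.exists_short_word_card_filter_ne hFR hF hbal (hW.exists_card_filter_ne hFR hF hK)
  push Not at hbal
  refine ⟨[], ?_, by simpa using hbal⟩
  have : (#R : ℝ) / #F ≤ Fintype.card Q :=
    (div_le_self (by positivity) (by exact_mod_cast hF.card_pos)).trans
      (by exact_mod_cast card_le_univ R)
  simp only [List.length_nil, Nat.cast_zero]
  linarith

end Escape

section Growth

noncomputable def growthCost (L n k l : ℕ) : ℝ := L + n + 1 - k / l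

theorem growthCost_nonneg {L n k : ℕ} (hkn : k ≤ n) (l : ℕ) : 0 ≤ growthCost L n k l := by
  have hk : (k : ℝ) / l ≤ k := by
    rcases l.eq_zero_or_pos with rfl | hl
    · simp
    · exact div_le_self (by positivity) (by exact_mod_cast hl)
  have : (k : ℝ) ≤ n := by exact_mod_cast hkn
  unfold growthCost
  linarith

theorem sum_growthCost_le (L n k : ℕ) {M : ℕ} (hM : 0 < M) :
    ∑ l ∈ Ico 1 M, growthCost L n k l ≤ (M - 1) * (L + n + 1) - k * Real.log M := by
  obtain ⟨N, rfl⟩ : ∃ N, M = N + 1 := ⟨M - 1, by omega⟩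
  have hlog : Real.log (N + 1) ≤ ∑ l ∈ Ico 1 (N + 1), (l : ℝ)⁻¹ := by
    simpa [harmonic_eq_sum_Icc, Ico_add_one_right_eq_Icc] using log_add_one_le_harmonic N
  simp only [growthCost, sum_sub_distrib, sum_const, Nat.card_Ico, nsmul_eq_mul, div_eq_mul_inv,
    ← mul_sum]
  push_cast
  have := mul_le_mul_of_nonneg_left hlog (Nat.cast_nonneg (α := ℝ) k)
  linarith

theorem growthCost_add_sum_le {L n k : ℕ} (hkn : k ≤ n) {m m' M : ℕ} (hmm' : m < m')
    (hm'M : m' ≤ M) :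
    growthCost L n k m + ∑ l ∈ Ico m' M, growthCost L n k l ≤
      ∑ l ∈ Ico m M, growthCost L n k l := by
  rw [← sum_Ico_consecutive _ hmm'.le hm'M]
  gcongr
  exact single_le_sum (fun l _ => growthCost_nonneg hkn l) (left_mem_Ico.2 hmm')

end Growth

section Construction

variable {Q α : Type*} [Fintype Q] [DecidableEq Q] {δ : Q → α → Q} {W : Finset (List α)}
  {R : Finset Q} {L M : ℕ}

theorem IsIndependent.exists_growth_step (hW : IsIndependent δ W R)
    (hMub : ∀ K ⊆ R, Reducible δ K → #K ≤ M) (hMmem : ∃ K ⊆ R, Reducible δ K ∧ #K = M)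
    (hLub : ∀ w ∈ W, w.length ≤ L) {v : List α} {c : Q} (hc : 0 < #(fiber δ R v c))
    (hlt : #(fiber δ R v c) < M) :
    ∃ u, (∀ p, run δ p u ∈ R) ∧ (∀ d, #(fiber δ R v d) = M → #(fiber δ R (u ++ v) d) = M) ∧
      #(fiber δ R v c) < #(fiber δ R (u ++ v) c) ∧
      (u.length : ℝ) ≤ growthCost L (Fintype.card Q) #R #(fiber δ R v c) := by
  obtain ⟨K, hKR, hK, hKM⟩ := hMmem
  obtain ⟨y, hy, w, hw, hgt⟩ := hW.exists_short_word_card_filter_gt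
    (F := fiber δ R v c) (filter_subset _ _) (card_pos.1 hc) ⟨K, hKR, hK, hKM ▸ hlt⟩
  refine ⟨y ++ w, fun p => hW.run_append_mem p y hw,
    fun d hd => hW.card_fiber_append_eq hMub hd y hw, ?_, ?_⟩
  · rwa [fiber_append fun p _ => hW.run_append_mem p y hw]
  · have : (w.length : ℝ) ≤ L := by exact_mod_cast hLub w hw
    rw [List.length_append, Nat.cast_add, growthCost]
    linarith

theorem IsIndependent.exists_word_card_fiber_eq (hW : IsIndependent δ W R)
    (hMub : ∀ K ⊆ R, Reducible δ K → #K ≤ M) (hMmem : ∃ K ⊆ R, Reducible δ K ∧ #K = M)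
    (hLub : ∀ w ∈ W, w.length ≤ L) (c : Q) (v : List α) (hc : 0 < #(fiber δ R v c))
    (hv : ∀ p ∈ R, run δ p v ∈ R) :
    ∃ v', (∀ p ∈ R, run δ p v' ∈ R) ∧ (∀ d, #(fiber δ R v d) = M → #(fiber δ R v' d) = M) ∧
      #(fiber δ R v' c) = M ∧
      (v'.length : ℝ) ≤ v.length +
        ∑ l ∈ Ico #(fiber δ R v c) M, growthCost L (Fintype.card Q) #R l := by
  by_cases hfull : #(fiber δ R v c) = M
  · exact ⟨v, hv, fun d hd => hd, hfull, by simp [hfull]⟩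
  have hlt := lt_of_le_of_ne (card_fiber_le hMub v c) hfull
  obtain ⟨u, hu, hpin, hgt, hlen⟩ := hW.exists_growth_step hMub hMmem hLub hc hlt
  obtain ⟨v', hv', hpin', hfull', hlen'⟩ := hW.exists_word_card_fiber_eq hMub hMmem hLub c
    (u ++ v) (hc.trans hgt) fun p _ => by rw [run_append]; exact hv _ (hu p)
  refine ⟨v', hv', fun d hd => hpin' d (hpin d hd), hfull', ?_⟩
  have := growthCost_add_sum_le (L := L) (card_le_univ R) hgt (card_fiber_le hMub (u ++ v) c)
  rw [List.length_append, Nat.cast_add] at hlen'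
  linarith
termination_by M - #(fiber δ R v c)
decreasing_by have := card_fiber_le hMub (u ++ v) c; omega

theorem IsIndependent.exists_finset_card_fiber_eq (hW : IsIndependent δ W R)
    (hMub : ∀ K ⊆ R, Reducible δ K → #K ≤ M) (hMmem : ∃ K ⊆ R, Reducible δ K ∧ #K = M)
    (hLub : ∀ w ∈ W, w.length ≤ L) (i : ℕ) (hi : ∀ j < i, j * M < #R) :
    ∃ v, ∃ C ⊆ R, #C = i ∧ (∀ c ∈ C, #(fiber δ R v c) = M) ∧ (∀ p ∈ R, run δ p v ∈ R) ∧
      (v.length : ℝ) ≤ i * ∑ l ∈ Ico 1 M, growthCost L (Fintype.card Q) #R l := by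
  induction i with
  | zero => exact ⟨[], ∅, empty_subset _, rfl, by simp, fun p hp => hp, by simp⟩
  | succ i ih =>
    obtain ⟨v, C, hCR, hC, hfull, hv, hlen⟩ := ih fun j hj => hi j (by omega)
    obtain ⟨p, hp, hpC⟩ := exists_run_notMem hfull (hC ▸ hi i i.lt_succ_self)
    have hc0 : 0 < #(fiber δ R v (run δ p v)) := card_pos.2 ⟨p, mem_filter.2 ⟨hp, rfl⟩⟩
    obtain ⟨v', hv', hpin, hc, hlen'⟩ :=
      hW.exists_word_card_fiber_eq hMub hMmem hLub (run δ p v) v hc0 hv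
    refine ⟨v', insert (run δ p v) C, insert_subset (hv p hp) hCR,
      by rw [card_insert_of_notMem hpC, hC], ?_, hv', ?_⟩
    · intro c hc'
      rcases mem_insert.1 hc' with rfl | hcC
      exacts [hc, hpin c (hfull c hcC)]
    · have : ∑ l ∈ Ico #(fiber δ R v (run δ p v)) M, growthCost L (Fintype.card Q) #R l ≤
          ∑ l ∈ Ico 1 M, growthCost L (Fintype.card Q) #R l :=
        sum_le_sum_of_subset_of_nonneg (Ico_subset_Ico_left hc0) fun l _ _ =>
          growthCost_nonneg (card_le_univ R) l
      push_cast
      linarith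

end Construction

theorem mul_lt_of_lt_ceil_div {j k M : ℕ} (hM : 0 < M) (h : (j : ℤ) < ⌈(k : ℚ) / M⌉) :
    j * M < k := by
  have := Int.lt_ceil.1 h
  rw [Int.cast_natCast, lt_div_iff₀ (by exact_mod_cast hM)] at this
  exact_mod_cast this

theorem stmt_13_general {Q A : Type*} [Fintype Q] [DecidableEq Q]
    (δ : Q → A → Q) (W : Finset (List A)) (R : Finset Q) (k : ℕ)
    (hW : IsIndependent δ W R) (hk : W.card = k)
    (L : ℕ) (hLub : ∀ w ∈ W, w.length ≤ L)
    (M : ℕ)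
    (hMub : ∀ K ⊆ R, Reducible δ K → K.card ≤ M)
    (hMmem : ∃ K ⊆ R, Reducible δ K ∧ K.card = M)
    (t : ℕ) (ht2 : (t : ℚ) ≤ ⌈(k : ℚ) / (M : ℚ)⌉) :
    ∃ q : Fin t → Q, Function.Injective q ∧ (∀ i, q i ∈ R) ∧
      ∃ v : List A,
        (∀ i, (R.filter (fun p => run δ p v = q i)).card = M) ∧
        (v.length : ℝ) ≤ (t : ℝ) * ((M : ℝ) - 1) * ((L : ℝ) + (Fintype.card Q : ℝ) + 1)
          - (t : ℝ) * (k : ℝ) * Real.log (M : ℝ) := by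
  have hM : 0 < M := by
    obtain ⟨K, -, ⟨v, q, hK⟩, rfl⟩ := hMmem
    exact card_pos.2 (image_nonempty.1 (hK ▸ singleton_nonempty q))
  have hkR : #R = k := hW.1 ▸ hk
  obtain ⟨v, C, hCR, hC, hfull, -, hlen⟩ := hW.exists_finset_card_fiber_eq hMub hMmem hLub t
    fun j hj => hkR ▸ mul_lt_of_lt_ceil_div hM
      (by exact_mod_cast (Nat.cast_lt.2 hj).trans_le ht2)
  let e := C.equivFinOfCardEq hC
  refine ⟨fun i => e.symm i, Subtype.val_injective.comp e.symm.injective,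
    fun i => hCR (e.symm i).2, v, fun i => hfull _ (e.symm i).2, ?_⟩
  calc (v.length : ℝ) ≤ t * ∑ l ∈ Ico 1 M, growthCost L (Fintype.card Q) #R l := hlen
    _ ≤ t * ((M - 1) * (L + Fintype.card Q + 1) - k * Real.log M) := by
        gcongr
        exact hkR ▸ sum_growthCost_le L _ _ hM
    _ = _ := by ring

/-- For every `1 ≤ t ≤ ⌈k/M⌉` there exist `t` pairwise distinct states
`q_1, …, q_t ∈ R` and a word `v` with `Card({q_i} v^{-1} ∩ R) = M` for each `i`
and `|v| ≤ t(M − 1)(L_W + n + 1) − t·k·ln M`. -/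
theorem stmt_13 {Q A : Type*} [Fintype Q] [DecidableEq Q] [Fintype A]
    (δ : Q → A → Q) (W : Finset (List A)) (R : Finset Q) (k : ℕ)
    (hW : IsIndependent δ W R) (hk : W.card = k)
    (L : ℕ) (hLub : ∀ w ∈ W, w.length ≤ L) (hLmem : ∃ w ∈ W, w.length = L)
    (M : ℕ)
    (hMub : ∀ K ⊆ R, Reducible δ K → K.card ≤ M)
    (hMmem : ∃ K ⊆ R, Reducible δ K ∧ K.card = M)
    (t : ℕ) (ht1 : 1 ≤ t) (ht2 : (t : ℚ) ≤ ⌈(k : ℚ) / (M : ℚ)⌉) :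
    ∃ q : Fin t → Q, Function.Injective q ∧ (∀ i, q i ∈ R) ∧
      ∃ v : List A,
        (∀ i, (R.filter (fun p => run δ p v = q i)).card = M) ∧
        (v.length : ℝ) ≤ (t : ℝ) * ((M : ℝ) - 1) * ((L : ℝ) + (Fintype.card Q : ℝ) + 1)
          - (t : ℝ) * (k : ℝ) * Real.log (M : ℝ) :=
  stmt_13_general δ W R k hW hk L hLub M hMub hMmem t ht2
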